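/- arXiv:1602.02015 — 2 statements merged into one kernel-verified Lean document; each statement's English description precedes it below -/
import Mathlib

section
/- Let φ be an integrable log-concave function on [0, ∞) with S₀ = ∫_0^∞ φ > 0 and S_p = ∫_0^∞ s^p φ(s) ds > 0 for some p > 0. Then the right maximal function φ*_r(0) = sup_{t>0} (1/t)∫_0^t φ(s) ds satisfies φ*_r(0)^p ≥ S₀^{p+1} / ((p+1) S_p). -/
/-!
Write `S₀, S_p` for the two integrals and `M` for the supremum of the averages, so that
`∫₀ᵗ φ ≤ M t` for every `t > 0` and hence the tail `∫ₜ^∞ φ` is at least `S₀ - M t`.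
The layer-cake formula then gives
`S_p = p ∫₀^∞ t^(p-1) ∫ₜ^∞ φ dt ≥ p ∫₀^(S₀/M) t^(p-1) (S₀ - M t) dt = S₀^(p+1) / ((p+1) M^p)`,
with equality for `φ = M · 1_[0, S₀/M]`.

Log-concavity only serves to make `M` finite (an unbounded set of averages would have the junk
supremum `0`): comparing with a point `b` where `φ b > 0` bounds `φ` on `[0, b/2]`, hence the
averages over short intervals; the averages over long ones are at most `S₀ / (b/2)`.
-/

open MeasureTheory Set Filter Topology

namespace Real

lemma min_le_rpow_of_mem_Icc {x α : ℝ} (hx : 0 < x) (hα : α ∈ Icc (0 : ℝ) 1) :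
    min x 1 ≤ x ^ α := by
  rcases le_total x 1 with h | h
  · calc min x 1 ≤ x := min_le_left _ _
      _ = x ^ (1 : ℝ) := (rpow_one x).symm
      _ ≤ x ^ α := rpow_le_rpow_of_exponent_ge hx h hα.2
  · exact (min_le_right _ _).trans (one_le_rpow h hα.1)

lemma le_max_one_rpow_inv_of_rpow_le {x δ γ K : ℝ} (hx : 0 ≤ x) (hδ : 0 < δ) (hδγ : δ ≤ γ)
    (hK : x ^ γ ≤ K) : x ≤ max K 1 ^ δ⁻¹ := by
  rcases le_total x 1 with h | h
  · exact h.trans (one_le_rpow (le_max_right _ _) (inv_nonneg.2 hδ.le))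
  · calc x = (x ^ δ) ^ δ⁻¹ := (rpow_rpow_inv hx hδ.ne').symm
      _ ≤ max K 1 ^ δ⁻¹ := by
        gcongr
        exact (rpow_le_rpow_of_exponent_le h hδγ).trans (hK.trans (le_max_left _ _))

lemma rpow_sub_one_mul_self {p : ℝ} (hp : p ≠ 0) (t : ℝ) : t ^ (p - 1) * t = t ^ p := by
  rcases eq_or_ne t 0 with rfl | ht
  · rw [mul_zero, zero_rpow hp]
  · rw [rpow_sub_one ht, div_mul_cancel₀ _ ht]

end Real

def LogConcaveOn (s : Set ℝ) (φ : ℝ → ℝ) : Prop :=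
  ∀ x ∈ s, ∀ y ∈ s, ∀ α ∈ Icc (0 : ℝ) 1, φ x ^ (1 - α) * φ y ^ α ≤ φ ((1 - α) * x + α * y)

/-- For `s ≤ a < b`, log-concavity at `a = (1 - α) s + α b` gives `φ s ^ (1 - α) ≤ φ a / φ b ^ α`,
and `1 - α = (b - a) / (b - s)` stays away from `0`. -/
theorem LogConcaveOn.bddAbove_image_Icc {φ : ℝ → ℝ} {a b c : ℝ}
    (hlc : LogConcaveOn (Ici c) φ) (hnn : ∀ s ∈ Ici c, 0 ≤ φ s) (hab : a < b) (hb : 0 < φ b) :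
    BddAbove (φ '' Icc c a) := by
  set δ := (b - a) / (b - c)
  refine ⟨max (φ a / min (φ b) 1) 1 ^ δ⁻¹, ?_⟩
  rintro _ ⟨s, ⟨hcs, hsa⟩, rfl⟩
  have hbs : 0 < b - s := by linarith
  set α := (a - s) / (b - s) with hα_def
  have hα : α ∈ Icc (0 : ℝ) 1 :=
    ⟨div_nonneg (by linarith) hbs.le, (div_le_one hbs).2 (by linarith)⟩
  have hcomb : (1 - α) * s + α * b = a := by rw [hα_def]; field_simp; ring
  have hδα : δ ≤ 1 - α := by
    rw [show 1 - α = (b - a) / (b - s) by rw [hα_def]; field_simp; ring]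
    exact div_le_div_of_nonneg_left (by linarith) hbs (by linarith)
  have hm : 0 < min (φ b) 1 := lt_min hb one_pos
  have key := hlc s hcs b (hcs.trans (hsa.trans hab.le)) α hα
  rw [hcomb] at key
  refine Real.le_max_one_rpow_inv_of_rpow_le (hnn s hcs) (div_pos (by linarith) (by linarith))
    hδα ((le_div_iff₀ hm).2 ?_)
  exact (mul_le_mul_of_nonneg_left (Real.min_le_rpow_of_mem_Icc hb hα)
    (Real.rpow_nonneg (hnn s hcs) _)).trans key

theorem exists_pos_of_integral_Ioi_pos {φ : ℝ → ℝ} {a : ℝ} (h : 0 < ∫ s in Ioi a, φ s) :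
    ∃ b > a, 0 < φ b := by
  by_contra! hφ
  exact h.not_ge (setIntegral_nonpos measurableSet_Ioi hφ)

section Averages

variable {φ : ℝ → ℝ}

theorem bddAbove_setOf_average {a C : ℝ} (hnn : ∀ s ∈ Ioi 0, 0 ≤ φ s)
    (hint : IntegrableOn φ (Ioi 0)) (ha : 0 < a) (hC : ∀ s ∈ Icc 0 a, φ s ≤ C) :
    BddAbove {y : ℝ | ∃ t > 0, y = (1 / t) * ∫ s in (0 : ℝ)..t, φ s} := by
  refine ⟨max C ((∫ s in Ioi 0, φ s) / a), ?_⟩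
  rintro _ ⟨t, ht, rfl⟩
  rcases le_total t a with hta | hat
  · have hF : ∫ s in (0 : ℝ)..t, φ s ≤ ∫ _ in (0 : ℝ)..t, C :=
      intervalIntegral.integral_mono_on ht.le
        ((intervalIntegrable_iff_integrableOn_Ioc_of_le ht.le).2
          (hint.mono_set Ioc_subset_Ioi_self)) intervalIntegrable_const
        fun s hs => hC s ⟨hs.1, hs.2.trans hta⟩
    rw [intervalIntegral.integral_const, smul_eq_mul, sub_zero] at hF
    calc 1 / t * ∫ s in (0 : ℝ)..t, φ s ≤ 1 / t * (t * C) := by gcongr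
      _ = C := by field_simp
      _ ≤ _ := le_max_left _ _
  · have hF : ∫ s in (0 : ℝ)..t, φ s ≤ ∫ s in Ioi 0, φ s := by
      rw [← intervalIntegral.integral_interval_add_Ioi hint
        (hint.mono_set (Ioi_subset_Ioi ht.le))]
      exact le_add_of_nonneg_right
        (setIntegral_nonneg measurableSet_Ioi fun s hs => hnn s (ht.trans hs))
    calc 1 / t * ∫ s in (0 : ℝ)..t, φ s ≤ 1 / t * ∫ s in Ioi 0, φ s := by gcongr
      _ ≤ 1 / a * ∫ s in Ioi 0, φ s := by
          gcongr
          exact setIntegral_nonneg measurableSet_Ioi hnn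
      _ = (∫ s in Ioi 0, φ s) / a := one_div_mul_eq_div _ _
      _ ≤ _ := le_max_right _ _

theorem pos_of_intervalIntegral_le_mul {M : ℝ} (hint : IntegrableOn φ (Ioi 0))
    (hS : 0 < ∫ s in Ioi 0, φ s) (hF : ∀ t > 0, ∫ s in (0 : ℝ)..t, φ s ≤ M * t) : 0 < M := by
  obtain ⟨t, hFt, ht⟩ := (((intervalIntegral_tendsto_integral_Ioi 0 hint tendsto_id).eventually
    (eventually_gt_nhds hS)).and (eventually_gt_atTop 0)).exists
  exact pos_of_mul_pos_left (hFt.trans_le (hF t ht)) ht.le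

end Averages

section Moments

variable {p : ℝ}

theorem lintegral_Ioi_rpow_mul_eq_lintegral_tail (hp : 0 < p) {f : ℝ → ENNReal}
    (hf : AEMeasurable f (volume.restrict (Ioi 0))) :
    ∫⁻ s in Ioi 0, ENNReal.ofReal (s ^ p) * f s =
      ENNReal.ofReal p *
        ∫⁻ t in Ioi 0, (∫⁻ s in Ici t, f s) * ENNReal.ofReal (t ^ (p - 1)) := by
  set μ := (volume.restrict (Ioi (0 : ℝ))).withDensity f
  have hnn : 0 ≤ᵐ[μ] fun s : ℝ => s :=
    (withDensity_absolutelyContinuous _ _).ae_le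
      (ae_restrict_of_forall_mem measurableSet_Ioi fun s hs => le_of_lt hs)
  have key := lintegral_rpow_eq_lintegral_meas_le_mul μ hnn aemeasurable_id hp
  rw [lintegral_withDensity_eq_lintegral_mul₀ hf (by fun_prop)] at key
  convert key using 2
  · simp only [Pi.mul_apply, mul_comm]
  · refine setLIntegral_congr_fun measurableSet_Ioi fun t ht => ?_
    rw [show {a : ℝ | t ≤ a} = Ici t from rfl, withDensity_apply _ measurableSet_Ici,
      Measure.restrict_restrict measurableSet_Ici, inter_eq_left.2 (Ici_subset_Ioi.2 ht)]

theorem integral_sub_mul_rpow_sub_one (hp : 0 < p) (T : ℝ) :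
    ∫ t in (0 : ℝ)..T, (T - t) * t ^ (p - 1) = T ^ (p + 1) / (p * (p + 1)) := by
  have hsplit : (fun t : ℝ => (T - t) * t ^ (p - 1)) = fun t => T * t ^ (p - 1) - t ^ p := by
    funext t
    rw [sub_mul, mul_comm t, Real.rpow_sub_one_mul_self hp.ne']
  have h1 : -1 < p - 1 := by linarith
  rw [hsplit, intervalIntegral.integral_sub
      ((intervalIntegral.intervalIntegrable_rpow' h1).const_mul T)
      (intervalIntegral.intervalIntegrable_rpow' (by linarith)),
    intervalIntegral.integral_const_mul, integral_rpow (Or.inl h1),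
    integral_rpow (Or.inl (by linarith)), sub_add_cancel, Real.zero_rpow hp.ne',
    Real.zero_rpow (by linarith), ← Real.rpow_sub_one_mul_self (p := p + 1) (by linarith),
    add_sub_cancel_right]
  field_simp
  ring

theorem ofReal_le_lintegral_Ioi_sub_mul_rpow {T : ℝ} (hp : 0 < p) (hT : 0 ≤ T) :
    ENNReal.ofReal (T ^ (p + 1) / (p * (p + 1))) ≤
      ∫⁻ t in Ioi 0, ENNReal.ofReal (T - t) * ENNReal.ofReal (t ^ (p - 1)) := by
  have hint : IntegrableOn (fun t : ℝ => (T - t) * t ^ (p - 1)) (Ioc 0 T) :=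
    (intervalIntegrable_iff_integrableOn_Ioc_of_le hT).1
      ((intervalIntegral.intervalIntegrable_rpow' (by linarith)).continuousOn_mul
        (by fun_prop))
  rw [← integral_sub_mul_rpow_sub_one hp, intervalIntegral.integral_of_le hT,
    ofReal_integral_eq_lintegral_ofReal hint
      (ae_restrict_of_forall_mem measurableSet_Ioc fun t ht =>
        mul_nonneg (sub_nonneg.2 ht.2) (Real.rpow_nonneg ht.1.le _))]
  calc ∫⁻ t in Ioc 0 T, ENNReal.ofReal ((T - t) * t ^ (p - 1))
      = ∫⁻ t in Ioc 0 T, ENNReal.ofReal (T - t) * ENNReal.ofReal (t ^ (p - 1)) :=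
        setLIntegral_congr_fun measurableSet_Ioc fun t ht =>
          ENNReal.ofReal_mul (sub_nonneg.2 ht.2)
    _ ≤ _ := lintegral_mono_set Ioc_subset_Ioi_self

theorem integral_Ioi_rpow_add_one_div_le_integral_rpow_mul {φ : ℝ → ℝ} {M : ℝ} (hp : 0 < p)
    (hnn : ∀ s ∈ Ioi 0, 0 ≤ φ s) (hint : IntegrableOn φ (Ioi 0))
    (hint_p : IntegrableOn (fun s => s ^ p * φ s) (Ioi 0)) (hM : 0 < M)
    (hF : ∀ t > 0, ∫ s in (0 : ℝ)..t, φ s ≤ M * t) :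
    (∫ s in Ioi 0, φ s) ^ (p + 1) / ((p + 1) * M ^ p) ≤ ∫ s in Ioi 0, s ^ p * φ s := by
  set S := ∫ s in Ioi 0, φ s
  set T := S / M
  have hS : 0 ≤ S := setIntegral_nonneg measurableSet_Ioi hnn
  have hT : 0 ≤ T := div_nonneg hS hM.le
  have htail : ∀ t ∈ Ioi (0 : ℝ),
      ENNReal.ofReal (M * (T - t)) ≤ ∫⁻ s in Ici t, ENNReal.ofReal (φ s) := by
    intro t ht
    have hint_t := hint.mono_set (Ioi_subset_Ioi (le_of_lt ht))
    rw [setLIntegral_congr Ioi_ae_eq_Ici.symm, ← ofReal_integral_eq_lintegral_ofReal hint_t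
      (ae_restrict_of_forall_mem measurableSet_Ioi fun s hs => hnn s (mem_Ioi.2 (ht.trans hs)))]
    refine ENNReal.ofReal_le_ofReal ?_
    have hsplit := intervalIntegral.integral_interval_add_Ioi hint hint_t
    have hMT : M * (T - t) = S - M * t := by rw [mul_sub, mul_div_cancel₀ _ hM.ne']
    linarith [hF t ht]
  have hmoment : ENNReal.ofReal (∫ s in Ioi 0, s ^ p * φ s) =
      ∫⁻ s in Ioi 0, ENNReal.ofReal (s ^ p) * ENNReal.ofReal (φ s) := by
    rw [ofReal_integral_eq_lintegral_ofReal hint_p (ae_restrict_of_forall_mem measurableSet_Ioi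
      fun s hs => mul_nonneg (Real.rpow_nonneg (le_of_lt hs) _) (hnn s hs))]
    exact setLIntegral_congr_fun measurableSet_Ioi fun s hs =>
      ENNReal.ofReal_mul (Real.rpow_nonneg (le_of_lt hs) _)
  have hscale : p * (M * (T ^ (p + 1) / (p * (p + 1)))) = S ^ (p + 1) / ((p + 1) * M ^ p) := by
    rw [Real.div_rpow hS hM.le, Real.rpow_add_one hM.ne']
    field_simp
  rw [← ENNReal.ofReal_le_ofReal_iff (setIntegral_nonneg measurableSet_Ioi fun s hs =>
      mul_nonneg (Real.rpow_nonneg (le_of_lt hs) _) (hnn s hs)), hmoment,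
    lintegral_Ioi_rpow_mul_eq_lintegral_tail hp
      hint.aestronglyMeasurable.aemeasurable.ennreal_ofReal,
    ← hscale, ENNReal.ofReal_mul hp.le, ENNReal.ofReal_mul hM.le]
  gcongr
  calc ENNReal.ofReal M * ENNReal.ofReal (T ^ (p + 1) / (p * (p + 1)))
      ≤ ENNReal.ofReal M *
          ∫⁻ t in Ioi 0, ENNReal.ofReal (T - t) * ENNReal.ofReal (t ^ (p - 1)) := by
        gcongr
        exact ofReal_le_lintegral_Ioi_sub_mul_rpow hp hT
    _ = ∫⁻ t in Ioi 0, ENNReal.ofReal (M * (T - t)) * ENNReal.ofReal (t ^ (p - 1)) := by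
        rw [← lintegral_const_mul' _ _ ENNReal.ofReal_ne_top]
        simp only [ENNReal.ofReal_mul hM.le, mul_assoc]
    _ ≤ ∫⁻ t in Ioi 0, (∫⁻ s in Ici t, ENNReal.ofReal (φ s)) * ENNReal.ofReal (t ^ (p - 1)) :=
        setLIntegral_mono' measurableSet_Ioi fun t ht => by gcongr; exact htail t ht

end Moments

theorem logconcave_rightMaximal_ge
    (p : ℝ) (hp : 0 < p) (φ : ℝ → ℝ)
    (hnn : ∀ s ∈ Set.Ici (0:ℝ), 0 ≤ φ s)
    (hlc : ∀ x ∈ Set.Ici (0:ℝ), ∀ y ∈ Set.Ici (0:ℝ), ∀ α ∈ Set.Icc (0:ℝ) 1,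
      φ x ^ (1 - α) * φ y ^ α ≤ φ ((1 - α) * x + α * y))
    (hint : IntegrableOn φ (Set.Ici (0:ℝ)))
    (hS0 : 0 < ∫ s in Set.Ici (0:ℝ), φ s)
    (hSp : 0 < ∫ s in Set.Ici (0:ℝ), s ^ p * φ s) :
    (∫ s in Set.Ici (0:ℝ), φ s) ^ (p + 1) /
        ((p + 1) * ∫ s in Set.Ici (0:ℝ), s ^ p * φ s)
      ≤ (sSup {y : ℝ | ∃ t > 0, y = (1 / t) * ∫ s in (0:ℝ)..t, φ s}) ^ p := by
  simp only [integral_Ici_eq_integral_Ioi] at hS0 hSp ⊢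
  have hnn' : ∀ s ∈ Ioi (0 : ℝ), 0 ≤ φ s := fun s hs => hnn s (Ioi_subset_Ici_self hs)
  have hint' := hint.mono_set Ioi_subset_Ici_self
  obtain ⟨b, hb, hφb⟩ := exists_pos_of_integral_Ioi_pos hS0
  obtain ⟨C, hC⟩ := LogConcaveOn.bddAbove_image_Icc hlc hnn (half_lt_self hb) hφb
  have hbdd := bddAbove_setOf_average hnn' hint' (half_pos hb)
    fun s hs => hC (mem_image_of_mem φ hs)
  set M := sSup {y : ℝ | ∃ t > 0, y = (1 / t) * ∫ s in (0:ℝ)..t, φ s}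
  have hF : ∀ t > 0, ∫ s in (0 : ℝ)..t, φ s ≤ M * t := fun t ht => by
    have := le_csSup hbdd ⟨t, ht, rfl⟩
    rwa [one_div, inv_mul_le_iff₀ ht, mul_comm] at this
  have hM := pos_of_intervalIntegral_le_mul hint' hS0 hF
  have hint_p : IntegrableOn (fun s => s ^ p * φ s) (Ioi 0) := by
    by_contra h
    exact hSp.ne' (integral_undef h)
  have key := integral_Ioi_rpow_add_one_div_le_integral_rpow_mul hp hnn' hint' hint_p hM hF
  rw [div_le_iff₀ (by positivity)] at key ⊢
  linear_combination key
end

section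
/- If φ is a centered log-concave probability density on ℝ with variance σ², then max_{s∈ℝ} φ(s)² ≤ 4/σ². -/
/-!
Let `M = φ s₀ > 0` and `F u = ∫_{y ≤ u} φ`. Log-concavity gives `φ y φ s₀ ≤ φ u φ (y + s₀ - u)` for
`y ≤ u ≤ s₀`; integrating in `y` yields `M F u ≤ φ u` on `(-∞, s₀]`. By the layer-cake formula this
becomes `M m_{k+1} ≤ (k+1) m_k` for the one-sided moments `m_k = ∫_{x ≤ s₀} (s₀ - x)^k φ x`, so
`m_2 ≤ 2 / M²`. Reflecting gives the same bound to the right of `s₀`, and for a centered density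
`σ² + s₀² = ∫ (s₀ - x)² φ ≤ 4 / M²`.
-/

open MeasureTheory Set Real
open scoped ENNReal

def IsLogConcave (φ : ℝ → ℝ) : Prop :=
  ∀ x y : ℝ, ∀ α ∈ Icc (0:ℝ) 1, φ x ^ (1 - α) * φ y ^ α ≤ φ ((1 - α) * x + α * y)

theorem lintegral_Iic_mul_pow_succ_eq {f : ℝ → ℝ≥0∞} (hf : AEMeasurable f) (s₀ : ℝ) (k : ℕ) :
    ∫⁻ x in Iic s₀, f x * ENNReal.ofReal ((s₀ - x) ^ (k + 1)) =
      ∫⁻ t in Ioi 0, (∫⁻ y in Iic (s₀ - t), f y) * ENNReal.ofReal ((k + 1) * t ^ k) := by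
  set μ := volume.withDensity f
  have hprim : ∀ x : ℝ, ∫ t in (0:ℝ)..x, ((k:ℝ) + 1) * t ^ k = x ^ (k + 1) := fun x => by
    rw [intervalIntegral.integral_const_mul, integral_pow]
    field_simp
    simp
  have layer := lintegral_comp_eq_lintegral_meas_le_mul (μ.restrict (Iic s₀))
    (f := fun x => s₀ - x) (g := fun t => ((k:ℝ) + 1) * t ^ k)
    (ae_restrict_of_forall_mem measurableSet_Iic fun x hx => sub_nonneg.2 hx)
    (by fun_prop) (fun t _ => (by fun_prop : Continuous _).intervalIntegrable _ _)
    (ae_restrict_of_forall_mem measurableSet_Ioi fun t (ht : 0 < t) => by positivity)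
  simp only [hprim] at layer
  have hlevel : ∀ t > 0, μ.restrict (Iic s₀) {a | t ≤ s₀ - a} = ∫⁻ y in Iic (s₀ - t), f y := by
    intro t ht
    have hset : {a | t ≤ s₀ - a} ∩ Iic s₀ = Iic (s₀ - t) := by
      ext a
      simp only [mem_inter_iff, mem_ofPred_eq, mem_Iic]
      exact ⟨fun h => by linarith [h.1], fun h => ⟨by linarith, by linarith⟩⟩
    rw [Measure.restrict_apply (measurableSet_le measurable_const (by fun_prop)), hset,
      withDensity_apply _ measurableSet_Iic]
  have hdens : ∫⁻ x in Iic s₀, ENNReal.ofReal ((s₀ - x) ^ (k + 1)) ∂μ =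
      ∫⁻ x in Iic s₀, f x * ENNReal.ofReal ((s₀ - x) ^ (k + 1)) :=
    setLIntegral_withDensity_eq_lintegral_mul₀ hf (by fun_prop) measurableSet_Iic
  rw [← hdens, layer]
  exact setLIntegral_congr_fun measurableSet_Ioi fun t ht => by rw [hlevel t ht]

theorem lintegral_Iic_pow_succ_mul_le {f : ℝ → ℝ≥0∞} (hf : AEMeasurable f) {s₀ : ℝ} {c : ℝ≥0∞}
    (h : ∀ u < s₀, c * ∫⁻ y in Iic u, f y ≤ f u) (k : ℕ) :
    c * ∫⁻ x in Iic s₀, f x * ENNReal.ofReal ((s₀ - x) ^ (k + 1)) ≤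
      (k + 1) * ∫⁻ x in Iic s₀, f x * ENNReal.ofReal ((s₀ - x) ^ k) := by
  have hreflect : ∫⁻ t in Ioi 0, f (s₀ - t) * ENNReal.ofReal ((k + 1) * t ^ k) =
      ∫⁻ x in Iio s₀, f x * ENNReal.ofReal ((k + 1) * (s₀ - x) ^ k) := by
    have := (Measure.measurePreserving_sub_left volume s₀).setLIntegral_comp_preimage_emb
      (MeasurableEquiv.subLeft s₀).measurableEmbedding
      (fun x => f x * ENNReal.ofReal ((k + 1) * (s₀ - x) ^ k)) (Iio s₀)
    simpa using this
  calc c * ∫⁻ x in Iic s₀, f x * ENNReal.ofReal ((s₀ - x) ^ (k + 1))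
      ≤ ∫⁻ t in Ioi 0, c * (∫⁻ y in Iic (s₀ - t), f y) * ENNReal.ofReal ((k + 1) * t ^ k) := by
        simp_rw [lintegral_Iic_mul_pow_succ_eq hf, mul_assoc]
        exact lintegral_const_mul_le _ _
    _ ≤ ∫⁻ t in Ioi 0, f (s₀ - t) * ENNReal.ofReal ((k + 1) * t ^ k) :=
        setLIntegral_mono' measurableSet_Ioi fun t (ht : 0 < t) => by
          gcongr
          exact h _ (by linarith)
    _ = ∫⁻ x in Iic s₀, f x * ENNReal.ofReal ((k + 1) * (s₀ - x) ^ k) := by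
        rw [hreflect, setLIntegral_congr Iio_ae_eq_Iic]
    _ = (k + 1) * ∫⁻ x in Iic s₀, f x * ENNReal.ofReal ((s₀ - x) ^ k) := by
        rw [← lintegral_const_mul' _ _ (by simp)]
        refine setLIntegral_congr_fun measurableSet_Iic fun x _ => ?_
        rw [ENNReal.ofReal_mul (by positivity)]
        norm_cast
        ring

theorem sq_mul_lintegral_Iic_sq_mul_le_two {f : ℝ → ℝ≥0∞} (hf : AEMeasurable f) {s₀ : ℝ}
    {c : ℝ≥0∞} (h : ∀ u < s₀, c * ∫⁻ y in Iic u, f y ≤ f u) (hmass : ∫⁻ y in Iic s₀, f y ≤ 1) :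
    c ^ 2 * ∫⁻ x in Iic s₀, f x * ENNReal.ofReal ((s₀ - x) ^ 2) ≤ 2 := by
  have h₀ := lintegral_Iic_pow_succ_mul_le hf h 0
  have h₁ := lintegral_Iic_pow_succ_mul_le hf h 1
  simp only [zero_add, pow_zero, pow_one, ENNReal.ofReal_one, mul_one, Nat.cast_zero,
    one_mul] at h₀
  simp only [Nat.cast_one, one_add_one_eq_two, pow_one] at h₁
  set J₁ := ∫⁻ x in Iic s₀, f x * ENNReal.ofReal (s₀ - x)
  set J₂ := ∫⁻ x in Iic s₀, f x * ENNReal.ofReal ((s₀ - x) ^ 2)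
  calc c ^ 2 * J₂ = c * (c * J₂) := by rw [sq, mul_assoc]
    _ ≤ c * (2 * J₁) := mul_le_mul_right h₁ _
    _ = 2 * (c * J₁) := by rw [mul_left_comm]
    _ ≤ 2 := mul_le_of_le_one_right' (h₀.trans hmass)

section SecondMoment

variable {μ : Measure ℝ} {φ : ℝ → ℝ}

theorem integrable_sub_sq_mul (s : ℝ) (h₀ : Integrable φ μ)
    (h₁ : Integrable (fun x => x * φ x) μ) (h₂ : Integrable (fun x => x ^ 2 * φ x) μ) :
    Integrable (fun x => (s - x) ^ 2 * φ x) μ := by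
  have := (h₂.sub (h₁.const_mul (2 * s))).add (h₀.const_mul (s ^ 2))
  exact this.congr (ae_of_all _ fun x => by simp only [Pi.add_apply, Pi.sub_apply]; ring)

theorem integral_sub_sq_mul (s : ℝ) (h₀ : Integrable φ μ)
    (h₁ : Integrable (fun x => x * φ x) μ) (h₂ : Integrable (fun x => x ^ 2 * φ x) μ) :
    ∫ x, (s - x) ^ 2 * φ x ∂μ =
      ∫ x, x ^ 2 * φ x ∂μ - 2 * s * ∫ x, x * φ x ∂μ + s ^ 2 * ∫ x, φ x ∂μ := by
  have hexpand : ∫ x, (s - x) ^ 2 * φ x ∂μ =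
      ∫ x, (x ^ 2 * φ x - 2 * s * (x * φ x)) + s ^ 2 * φ x ∂μ := by
    congr 1 with x
    ring
  have hdiff : Integrable (fun x => x ^ 2 * φ x - 2 * s * (x * φ x)) μ := h₂.sub (h₁.const_mul _)
  rw [hexpand, integral_add hdiff (h₀.const_mul _),
    integral_sub h₂ (h₁.const_mul _), integral_const_mul, integral_const_mul]

end SecondMoment

namespace IsLogConcave

variable {φ : ℝ → ℝ}

theorem mul_le_mul_add_sub (hφ : IsLogConcave φ) (hnn : ∀ x, 0 ≤ φ x) {a b d : ℝ}
    (hab : a ≤ b) (hbd : b ≤ d) : φ a * φ d ≤ φ b * φ (a + d - b) := by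
  obtain ⟨α, hα, rfl⟩ : ∃ α ∈ Icc (0:ℝ) 1, (1 - α) * a + α * d = b := by
    have hb : b ∈ segment ℝ a d := (segment_eq_Icc (hab.trans hbd)).symm ▸ ⟨hab, hbd⟩
    simpa [segment_eq_image] using hb
  have h₁ := hφ a d α hα
  have h₂ := hφ a d (1 - α) ⟨by linarith [hα.2], by linarith [hα.1]⟩
  rw [sub_sub_cancel] at h₂
  calc φ a * φ d = (φ a ^ (1 - α) * φ d ^ α) * (φ a ^ α * φ d ^ (1 - α)) := by
        rw [mul_mul_mul_comm, ← rpow_add' (hnn a) (by norm_num), ← rpow_add' (hnn d) (by norm_num),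
          sub_add_cancel, add_sub_cancel, rpow_one, rpow_one]
    _ ≤ φ ((1 - α) * a + α * d) * φ (α * a + (1 - α) * d) :=
        mul_le_mul h₁ h₂ (mul_nonneg (rpow_nonneg (hnn a) _) (rpow_nonneg (hnn d) _)) (hnn _)
    _ = _ := by ring_nf

theorem comp_neg (hφ : IsLogConcave φ) : IsLogConcave (fun x => φ (-x)) := by
  intro x y α hα
  simpa only [mul_neg, neg_add] using hφ (-x) (-y) α hα

theorem mul_lintegral_Iic_le (hφ : IsLogConcave φ) (hnn : ∀ x, 0 ≤ φ x) {u s₀ : ℝ}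
    (hu : u ≤ s₀) :
    ENNReal.ofReal (φ s₀) * ∫⁻ y in Iic u, ENNReal.ofReal (φ y) ≤
      ENNReal.ofReal (φ u) * ∫⁻ y in Iic s₀, ENNReal.ofReal (φ y) := by
  have htrans : ∫⁻ y in Iic u, ENNReal.ofReal (φ (y + (s₀ - u))) =
      ∫⁻ y in Iic s₀, ENNReal.ofReal (φ y) := by
    have := (measurePreserving_add_right volume (s₀ - u)).setLIntegral_comp_preimage_emb
      (measurableEmbedding_addRight (s₀ - u)) (fun y => ENNReal.ofReal (φ y)) (Iic s₀)
    simpa using this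
  rw [← htrans, ← lintegral_const_mul' _ _ ENNReal.ofReal_ne_top,
    ← lintegral_const_mul' _ _ ENNReal.ofReal_ne_top]
  refine setLIntegral_mono' measurableSet_Iic fun y (hy : y ≤ u) => ?_
  rw [← ENNReal.ofReal_mul (hnn _), ← ENNReal.ofReal_mul (hnn _)]
  refine ENNReal.ofReal_le_ofReal ?_
  have := hφ.mul_le_mul_add_sub hnn hy hu
  rw [show y + s₀ - u = y + (s₀ - u) by ring] at this
  linarith

theorem integral_Iic_sq_mul_le (hφ : IsLogConcave φ) (hnn : ∀ x, 0 ≤ φ x) (hint : Integrable φ)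
    (hmass : ∫ x, φ x ≤ 1) {s₀ : ℝ} (hpos : 0 < φ s₀)
    (hmom : IntegrableOn (fun x => (s₀ - x) ^ 2 * φ x) (Iic s₀)) :
    ∫ x in Iic s₀, (s₀ - x) ^ 2 * φ x ≤ 2 / φ s₀ ^ 2 := by
  have htotal : ∫⁻ y in Iic s₀, ENNReal.ofReal (φ y) ≤ 1 := by
    refine setLIntegral_le_lintegral _ _ |>.trans ?_
    rw [← ofReal_integral_eq_lintegral_ofReal hint (ae_of_all _ hnn)]
    exact ENNReal.ofReal_le_one.2 hmass
  have hcdf_le : ∀ u < s₀, ENNReal.ofReal (φ s₀) * ∫⁻ y in Iic u, ENNReal.ofReal (φ y) ≤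
      ENNReal.ofReal (φ u) := fun u hu =>
    (hφ.mul_lintegral_Iic_le hnn hu.le).trans (mul_le_of_le_one_right' htotal)
  have hmom' : ∫⁻ x in Iic s₀, ENNReal.ofReal (φ x) * ENNReal.ofReal ((s₀ - x) ^ 2) =
      ENNReal.ofReal (∫ x in Iic s₀, (s₀ - x) ^ 2 * φ x) := by
    rw [ofReal_integral_eq_lintegral_ofReal hmom
      (ae_of_all _ fun x => mul_nonneg (sq_nonneg _) (hnn x))]
    simp_rw [← ENNReal.ofReal_mul (hnn _), mul_comm]
  have hbound := sq_mul_lintegral_Iic_sq_mul_le_two hint.aemeasurable.ennreal_ofReal hcdf_le htotal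
  rw [hmom', ← ENNReal.ofReal_pow hpos.le, ← ENNReal.ofReal_mul (by positivity),
    ← ENNReal.ofReal_ofNat, ENNReal.ofReal_le_ofReal_iff zero_le_two] at hbound
  rwa [le_div_iff₀ (by positivity), mul_comm]

theorem integral_sub_sq_mul_le (hφ : IsLogConcave φ) (hnn : ∀ x, 0 ≤ φ x) (hint : Integrable φ)
    (hmass : ∫ x, φ x ≤ 1) {s : ℝ} (hpos : 0 < φ s)
    (hmom : Integrable fun x => (s - x) ^ 2 * φ x) :
    ∫ x, (s - x) ^ 2 * φ x ≤ 4 / φ s ^ 2 := by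
  have hleft := hφ.integral_Iic_sq_mul_le hnn hint hmass hpos hmom.integrableOn
  have hreflect : ∫ x in Iic (-s), (-s - x) ^ 2 * φ (-x) = ∫ x in Ioi s, (s - x) ^ 2 * φ x := by
    rw [← neg_neg s, ← integral_comp_neg_Iic, neg_neg]
    congr 1 with x
    ring
  have hright : ∫ x in Ioi s, (s - x) ^ 2 * φ x ≤ 2 / φ s ^ 2 := by
    have := hφ.comp_neg.integral_Iic_sq_mul_le (fun x => hnn (-x)) hint.comp_neg
      (by rwa [integral_neg_eq_self]) (s₀ := -s) (by rwa [neg_neg])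
      (hmom.comp_neg.congr (ae_of_all _ fun x => by ring)).integrableOn
    rwa [neg_neg, hreflect] at this
  calc ∫ x, (s - x) ^ 2 * φ x
      = (∫ x in Iic s, (s - x) ^ 2 * φ x) + ∫ x in Ioi s, (s - x) ^ 2 * φ x :=
        (intervalIntegral.integral_Iic_add_Ioi hmom.integrableOn hmom.integrableOn).symm
    _ ≤ 2 / φ s ^ 2 + 2 / φ s ^ 2 := add_le_add hleft hright
    _ = 4 / φ s ^ 2 := by ring

end IsLogConcave

theorem centered_logconcave_density_max_le
    (φ : ℝ → ℝ) (σ : ℝ) (hσ : 0 < σ)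
    (hnn : ∀ s, 0 ≤ φ s)
    (hlc : ∀ x y : ℝ, ∀ α ∈ Set.Icc (0:ℝ) 1,
      φ x ^ (1 - α) * φ y ^ α ≤ φ ((1 - α) * x + α * y))
    (hint : Integrable φ)
    (hmass : ∫ s, φ s = 1)
    (hmean_int : Integrable (fun s => s * φ s))
    (hcent : ∫ s, s * φ s = 0)
    (hmom : Integrable (fun s => s ^ 2 * φ s))
    (hvar : ∫ s, s ^ 2 * φ s = σ ^ 2) :
    ∀ s, φ s ^ 2 ≤ 4 / σ ^ 2 := by
  intro s
  rcases (hnn s).eq_or_lt with hzero | hpos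
  · rw [← hzero, zero_pow two_ne_zero]
    positivity
  have hbound := IsLogConcave.integral_sub_sq_mul_le hlc hnn hint hmass.le hpos
    (integrable_sub_sq_mul s hint hmean_int hmom)
  rw [integral_sub_sq_mul s hint hmean_int hmom, hvar, hcent, hmass] at hbound
  have hσ_le : σ ^ 2 ≤ 4 / φ s ^ 2 := by linarith [sq_nonneg s]
  exact (le_div_comm₀ (by positivity) (by positivity)).1 hσ_le
end
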